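/- Let λ be a composition of d. The family of Specht vectors {v_T : T a standard λ-tableau} is linearly independent in the free ℤ-module on λ-tabloids. -/

import Mathlib

open Equiv Finset

/-! A composition `λ = (λ_1, …, λ_n)` of `d` is encoded as `lam : Fin n → ℕ` (with, in the
theorems, the hypotheses `∀ i, 0 < lam i` and `∑ i, lam i = d`).  Enumerating the cells of the
Young diagram `[λ]` in row-reading order identifies them with `Fin d`: the cell `(i, j)` (with
`0 ≤ j < λ_i`, 0-indexed) corresponds to `psum lam i + j` where `psum lam i = λ_0 + ⋯ + λ_{i-1}`.
A `λ`-tableau `T : [λ] → {1, …, d}` is thus encoded as a permutation `T : Perm (Fin d)`, with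
`T k` the entry of the `k`-th cell; under this identification `T` itself is its own
row-reading word `w_T`. -/

/-- Partial sum `λ_0 + ⋯ + λ_{i-1}` of a composition. -/
def psum (n : ℕ) (lam : Fin n → ℕ) (i : Fin n) : ℕ :=
  ∑ j ∈ Finset.univ.filter (fun j : Fin n => j < i), lam j

/-- The cells (in row-reading coordinates) of the `i`-th row of the Young diagram of `lam`. -/
def rowCells (n d : ℕ) (lam : Fin n → ℕ) (i : Fin n) : Finset (Fin d) :=
  Finset.univ.filter fun k : Fin d =>
    psum n lam i ≤ (k : ℕ) ∧ (k : ℕ) < psum n lam i + lam i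

/-- The cells (in row-reading coordinates) of the `j`-th column of the Young diagram of `lam`. -/
def colCells (n d : ℕ) (lam : Fin n → ℕ) (j : ℕ) : Finset (Fin d) :=
  Finset.univ.filter fun k : Fin d => ∃ i : Fin n, (k : ℕ) = psum n lam i + j ∧ j < lam i

/-- A tableau is row standard if its entries increase along each row. -/
def RowStandard (n d : ℕ) (lam : Fin n → ℕ) (T : Perm (Fin d)) : Prop :=
  ∀ i : Fin n, ∀ k ∈ rowCells n d lam i, ∀ k' ∈ rowCells n d lam i, k < k' → T k < T k'

/-- A tableau is standard if its entries increase along each row and down each column. -/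
def Standard (n d : ℕ) (lam : Fin n → ℕ) (T : Perm (Fin d)) : Prop :=
  RowStandard n d lam T ∧
    ∀ i i' : Fin n, ∀ j : ℕ, ∀ k k' : Fin d,
      (k : ℕ) = psum n lam i + j → (k' : ℕ) = psum n lam i' + j →
      j < lam i → j < lam i' → i < i' → T k < T k'

/-- Two tableaux are row-equivalent if corresponding rows have equal entry sets. -/
def RowEquiv (n d : ℕ) (lam : Fin n → ℕ) (T T' : Perm (Fin d)) : Prop :=
  ∀ i : Fin n, (rowCells n d lam i).image T = (rowCells n d lam i).image T'

/-- Row-equivalence as a setoid on tableaux. -/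
def rowSetoid (n d : ℕ) (lam : Fin n → ℕ) : Setoid (Perm (Fin d)) :=
  ⟨RowEquiv n d lam,
    fun _ _ => rfl,
    fun h i => (h i).symm,
    fun h h' i => (h i).trans (h' i)⟩

/-- A tabloid is a row-equivalence class of tableaux. -/
def Tabloid (n d : ℕ) (lam : Fin n → ℕ) : Type :=
  Quotient (rowSetoid n d lam)

/-- The right action of `w ∈ Σ_d` on tableaux, `(T·w)(c) = w⁻¹(T(c))`. -/
def tabAct (d : ℕ) (T : Perm (Fin d)) (w : Perm (Fin d)) : Perm (Fin d) :=
  w⁻¹ * T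

/-- The column group `col(T)`: permutations of the entries preserving the entry set of each
column of `T`. -/
def colGroup (n d : ℕ) (lam : Fin n → ℕ) (T : Perm (Fin d)) : Set (Perm (Fin d)) :=
  {w | ∀ j : ℕ, ((colCells n d lam j).image T).image w = (colCells n d lam j).image T}

open scoped Classical in
/-- The Specht vector `v_T = ∑_{w ∈ col(T)} sgn(w) · {T·w}` in the free `ℤ`-module on
tabloids. -/
noncomputable def spechtVector (n d : ℕ) (lam : Fin n → ℕ) (T : Perm (Fin d)) :
    Tabloid n d lam →₀ ℤ :=
  ∑ w ∈ Finset.univ.filter (fun w => w ∈ colGroup n d lam T),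
    (Perm.sign w : ℤ) • Finsupp.single (Quotient.mk (rowSetoid n d lam) (tabAct d T w)) 1

/-- The length of a permutation: its number of inversions. -/
def invLength (d : ℕ) (w : Perm (Fin d)) : ℕ :=
  (Finset.univ.filter fun p : Fin d × Fin d => p.1 < p.2 ∧ w p.2 < w p.1).card

/-- The Bruhat order on `Σ_d`: `u ≤ w` iff `u` is obtained from `w` by repeatedly multiplying
by transpositions, decreasing the length at each step. -/
def BruhatLE (d : ℕ) (u w : Perm (Fin d)) : Prop :=
  Relation.ReflTransGen
    (fun x y => (∃ a b : Fin d, a ≠ b ∧ y = x * Equiv.swap a b) ∧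
      invLength d y < invLength d x) w u

/-- The Young subgroup `W_λ ≤ Σ_d`: permutations stabilizing each consecutive block
`B_i = {λ_0 + ⋯ + λ_{i-1}, …, λ_0 + ⋯ + λ_i - 1}` (0-indexed). -/
def youngSubgroup (n d : ℕ) (lam : Fin n → ℕ) : Subgroup (Perm (Fin d)) where
  carrier := {w | ∀ (i : Fin n) (k : Fin d), k ∈ rowCells n d lam i ↔ w k ∈ rowCells n d lam i}
  one_mem' := by intro i k; simp
  mul_mem' := by
    intro a b ha hb i k
    exact (hb i k).trans (ha i (b k))
  inv_mem' := by
    intro a ha i k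
    have := (ha i (a⁻¹ k)).symm
    simpa using this

/-! Compare tableaux by `rowKey`: the row of each entry, read from the largest entry down,
ordered lexicographically. If `w ≠ 1` lies in the column group of a standard tableau `T` and `x`
is the largest entry moved by `w`, then `w x < x` lies in the same column of `T`, hence in a
higher row; so `{T·w}` has a strictly smaller key than `{T}`. Since distinct row-standard
tableaux lie in distinct tabloids, the coefficients of the Specht vectors `v_T` at the tabloids
`{T}` form a unitriangular matrix for this order. -/

theorem Finsupp.linearIndependent_of_triangular {ι α β R : Type*} [Ring R] [NoZeroDivisors R]
    [Preorder β] {v : ι → α →₀ R} (lead : ι → α) (key : ι → β)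
    (hlead : ∀ i, v i (lead i) ≠ 0) (hlt : ∀ i j, i ≠ j → v i (lead j) ≠ 0 → key j < key i) :
    LinearIndependent R v := by
  classical
  rw [linearIndependent_iff']
  intro s g hsum i hi
  by_contra hgi
  obtain ⟨i₀, hi₀, hmax⟩ :=
    (s.filter (g · ≠ 0)).exists_maximalFor key ⟨i, mem_filter.2 ⟨hi, hgi⟩⟩
  obtain ⟨hi₀s, hgi₀⟩ := mem_filter.1 hi₀
  have hcoeff : (∑ j ∈ s, g j • v j) (lead i₀) = g i₀ * v i₀ (lead i₀) := by
    rw [Finsupp.finsetSum_apply, sum_eq_single_of_mem i₀ hi₀s]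
    · rfl
    intro j hjs hji
    by_contra hne
    obtain ⟨hgj, hvj⟩ := mul_ne_zero_iff.1 hne
    have hlt := hlt j i₀ hji hvj
    exact hlt.not_ge (hmax (mem_filter.2 ⟨hjs, hgj⟩) hlt.le)
  rw [hsum] at hcoeff
  exact mul_ne_zero hgi₀ (hlead i₀) hcoeff.symm

theorem Equiv.Perm.exists_apply_lt_of_ne_one {α : Type*} [LinearOrder α] [Fintype α]
    {w : Perm α} (hw : w ≠ 1) : ∃ x, w x < x ∧ ∀ y, x < y → w y = y := by
  have hne : w.support.Nonempty := nonempty_iff_ne_empty.2 (mt Perm.support_eq_empty_iff.1 hw)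
  set x := w.support.max' hne
  have hx : x ∈ w.support := w.support.max'_mem hne
  refine ⟨x, lt_of_le_of_ne (w.support.le_max' _ (Perm.apply_mem_support.2 hx))
    (Perm.mem_support.1 hx), fun y hy => Perm.notMem_support.1 fun hys => ?_⟩
  exact (w.support.le_max' y hys).not_gt hy

theorem Finset.eqOn_of_strictMonoOn_of_image_eq {α β : Type*} [LinearOrder α] [LinearOrder β]
    {s : Finset α} {f g : α → β} (hf : StrictMonoOn f s) (hg : StrictMonoOn g s)
    (h : s.image f = s.image g) : Set.EqOn f g s := by
  have hcard : (s.image f).card = s.card := card_image_of_injOn hf.injOn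
  have hcomp : ∀ {f' : α → β}, StrictMonoOn f' s → s.image f' = s.image f →
      f' ∘ s.orderEmbOfFin rfl = (s.image f).orderEmbOfFin hcard := fun hf' himage =>
    orderEmbOfFin_unique hcard (fun i => himage ▸ mem_image_of_mem _ (orderEmbOfFin_mem s rfl i))
      fun i j hij => hf' (orderEmbOfFin_mem s rfl i) (orderEmbOfFin_mem s rfl j)
        ((s.orderEmbOfFin rfl).strictMono hij)
  intro x hx
  obtain ⟨i, rfl⟩ : x ∈ Set.range (s.orderEmbOfFin rfl) := by simpa using hx
  exact congrFun ((hcomp hf rfl).trans (hcomp hg h.symm).symm) i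

def rowIndex (n d : ℕ) (lam : Fin n → ℕ) (k : Fin d) : ℕ :=
  (univ.filter fun i : Fin n => psum n lam i + lam i ≤ k).card

section Diagram

variable {n d : ℕ} {lam : Fin n → ℕ}

theorem mem_rowCells {i : Fin n} {k : Fin d} :
    k ∈ rowCells n d lam i ↔ psum n lam i ≤ k ∧ (k : ℕ) < psum n lam i + lam i := by
  simp [rowCells]

theorem mem_colCells {j : ℕ} {k : Fin d} :
    k ∈ colCells n d lam j ↔ ∃ i : Fin n, (k : ℕ) = psum n lam i + j ∧ j < lam i := by
  simp [colCells]

theorem psum_add_self (i : Fin n) :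
    psum n lam i + lam i = ∑ j ∈ univ.filter (· ≤ i), lam j := by
  rw [psum, add_comm, ← sum_insert (by simp)]
  congr 1
  ext j
  simp [le_iff_eq_or_lt]

theorem psum_add_le_psum {i i' : Fin n} (h : i < i') : psum n lam i + lam i ≤ psum n lam i' :=
  (psum_add_self i).trans_le <| sum_le_sum_of_subset fun j hj => by
    simp only [mem_filter, mem_univ, true_and] at hj ⊢
    exact hj.trans_lt h

theorem psum_succ {i : Fin n} (h : (i : ℕ) + 1 < n) :
    psum n lam ⟨i + 1, h⟩ = psum n lam i + lam i := by
  rw [psum_add_self, psum]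
  congr 1
  ext j
  simp only [mem_filter, mem_univ, true_and, Fin.lt_def, Fin.le_def]
  omega

theorem psum_add_self_eq_sum {i : Fin n} (h : (i : ℕ) + 1 = n) :
    psum n lam i + lam i = ∑ j, lam j := by
  rw [psum_add_self, filter_true_of_mem fun j _ => Fin.le_def.2 (by omega)]

theorem exists_mem_rowCells (hsum : ∑ i, lam i = d) (k : Fin d) :
    ∃ i, k ∈ rowCells n d lam i := by
  have hn : 0 < n := Nat.pos_of_ne_zero fun hn => by
    subst hn
    simp only [univ_eq_empty, sum_empty] at hsum
    exact (hsum ▸ k).elim0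
  have hstart : (⟨0, hn⟩ : Fin n) ∈ univ.filter fun i => psum n lam i ≤ k := by
    rw [mem_filter, psum, sum_eq_zero fun j hj => absurd (Fin.lt_def.1 (mem_filter.1 hj).2)
      (Nat.not_lt_zero _)]
    exact ⟨mem_univ _, Nat.zero_le _⟩
  set i := (univ.filter fun i => psum n lam i ≤ k).max' ⟨_, hstart⟩
  have hi := (mem_filter.1 (max'_mem _ ⟨_, hstart⟩)).2
  refine ⟨i, mem_rowCells.2 ⟨hi, lt_of_not_ge fun hend => ?_⟩⟩
  by_cases hlast : (i : ℕ) + 1 < n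
  · have hsucc : (⟨i + 1, hlast⟩ : Fin n) ∈ univ.filter fun i => psum n lam i ≤ k := by
      simpa [psum_succ hlast] using hend
    exact (le_max' _ _ hsucc).not_gt (Fin.lt_def.2 (Nat.lt_succ_self _))
  · rw [psum_add_self_eq_sum (by omega), hsum] at hend
    exact hend.not_gt k.isLt

theorem rowIndex_eq_of_mem_rowCells {i : Fin n} {k : Fin d} (h : k ∈ rowCells n d lam i) :
    rowIndex n d lam k = i := by
  obtain ⟨hstart, hend⟩ := mem_rowCells.1 h
  rw [rowIndex, ← Fin.card_Iio i]
  congr 1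
  ext i'
  rw [mem_filter, mem_Iio]
  refine ⟨fun hi' => lt_of_not_ge fun hii' => ?_, fun hi' => ⟨mem_univ _, ?_⟩⟩
  · rcases hii'.eq_or_lt with rfl | hlt
    · omega
    · have := psum_add_le_psum (lam := lam) hlt
      omega
  · have := psum_add_le_psum (lam := lam) hi'
    omega

theorem exists_mem_colCells (hsum : ∑ i, lam i = d) (k : Fin d) :
    ∃ j, k ∈ colCells n d lam j := by
  obtain ⟨i, hi⟩ := exists_mem_rowCells hsum k
  obtain ⟨hstart, hend⟩ := mem_rowCells.1 hi
  exact ⟨k - psum n lam i, mem_colCells.2 ⟨i, by omega, by omega⟩⟩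

theorem Standard.rowIndex_lt_of_mem_colCells {S : Perm (Fin d)} (hS : Standard n d lam S)
    {j : ℕ} {k k' : Fin d} (hk : k ∈ colCells n d lam j) (hk' : k' ∈ colCells n d lam j)
    (hlt : S k < S k') : rowIndex n d lam k < rowIndex n d lam k' := by
  obtain ⟨i, hki, hji⟩ := mem_colCells.1 hk
  obtain ⟨i', hki', hji'⟩ := mem_colCells.1 hk'
  rw [rowIndex_eq_of_mem_rowCells (i := i) (mem_rowCells.2 ⟨by omega, by omega⟩),
    rowIndex_eq_of_mem_rowCells (i := i') (mem_rowCells.2 ⟨by omega, by omega⟩)]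
  rcases lt_trichotomy i i' with h | rfl | h
  · exact h
  · rw [Fin.ext (hki.trans hki'.symm)] at hlt
    exact absurd hlt (lt_irrefl _)
  · exact absurd (hS.2 i' i j k' k hki' hki hji' hji h) hlt.not_gt

theorem mem_colCells_of_mem_colGroup {S w : Perm (Fin d)} (hw : w ∈ colGroup n d lam S)
    {j : ℕ} {x : Fin d} (hx : S⁻¹ x ∈ colCells n d lam j) : S⁻¹ (w x) ∈ colCells n d lam j := by
  have hwx : w x ∈ (colCells n d lam j).image S :=
    hw j ▸ mem_image_of_mem w (mem_image.2 ⟨_, hx, S.apply_symm_apply x⟩)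
  obtain ⟨k, hk, hkx⟩ := mem_image.1 hwx
  simpa [← hkx] using hk

end Diagram

def rowKey (n d : ℕ) (lam : Fin n → ℕ) (S : Perm (Fin d)) : Lex ((Fin d)ᵒᵈ → ℕ) :=
  toLex fun x => rowIndex n d lam (S⁻¹ (OrderDual.ofDual x))

def tabloid (n d : ℕ) (lam : Fin n → ℕ) (T : Perm (Fin d)) : Tabloid n d lam :=
  Quotient.mk (rowSetoid n d lam) T

section Specht

variable {n d : ℕ} {lam : Fin n → ℕ}

theorem rowKey_congr (hsum : ∑ i, lam i = d) {S T : Perm (Fin d)} (h : RowEquiv n d lam S T) :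
    rowKey n d lam S = rowKey n d lam T := by
  refine congrArg toLex (funext fun x => ?_)
  obtain ⟨i, hi⟩ := exists_mem_rowCells hsum (S⁻¹ (OrderDual.ofDual x))
  have hx : OrderDual.ofDual x ∈ (rowCells n d lam i).image T :=
    h i ▸ mem_image.2 ⟨_, hi, S.apply_symm_apply _⟩
  obtain ⟨k, hk, hkx⟩ := mem_image.1 hx
  rw [rowIndex_eq_of_mem_rowCells hi, rowIndex_eq_of_mem_rowCells (by simpa [← hkx] using hk)]

theorem rowKey_tabAct_lt (hsum : ∑ i, lam i = d) {S w : Perm (Fin d)} (hS : Standard n d lam S)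
    (hw : w ∈ colGroup n d lam S) (hne : w ≠ 1) :
    rowKey n d lam (tabAct d S w) < rowKey n d lam S := by
  obtain ⟨x, hwx, hfix⟩ := Perm.exists_apply_lt_of_ne_one hne
  obtain ⟨j, hj⟩ := exists_mem_colCells hsum (S⁻¹ x)
  have hinv : ∀ y, (tabAct d S w)⁻¹ y = S⁻¹ (w y) := by simp [tabAct]
  refine ⟨OrderDual.toDual x, fun y hy => ?_, ?_⟩
  · simp only [rowKey, Pi.toLex_apply, hinv, hfix (OrderDual.ofDual y) hy]
  · simp only [rowKey, Pi.toLex_apply, hinv, OrderDual.ofDual_toDual]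
    exact hS.rowIndex_lt_of_mem_colCells (mem_colCells_of_mem_colGroup hw hj) hj
      (by simpa using hwx)

theorem RowStandard.eq_of_rowEquiv (hsum : ∑ i, lam i = d) {S T : Perm (Fin d)}
    (hS : RowStandard n d lam S) (hT : RowStandard n d lam T) (h : RowEquiv n d lam S T) :
    S = T :=
  Equiv.ext fun k =>
    have ⟨i, hi⟩ := exists_mem_rowCells hsum k
    eqOn_of_strictMonoOn_of_image_eq (fun a ha b hb => hS i a ha b hb)
      (fun a ha b hb => hT i a ha b hb) (h i) hi

theorem tabloid_eq_tabloid {S T : Perm (Fin d)} :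
    tabloid n d lam S = tabloid n d lam T ↔ RowEquiv n d lam S T :=
  Quotient.eq

theorem tabAct_one (T : Perm (Fin d)) : tabAct d T 1 = T := by
  simp [tabAct]

theorem one_mem_colGroup (T : Perm (Fin d)) : 1 ∈ colGroup n d lam T := fun j => by
  simp

open scoped Classical in
theorem spechtVector_apply (T : Perm (Fin d)) (q : Tabloid n d lam) :
    spechtVector n d lam T q = ∑ w ∈ univ.filter (fun w =>
      w ∈ colGroup n d lam T ∧ tabloid n d lam (tabAct d T w) = q),
      (Perm.sign w : ℤ) := by
  rw [spechtVector, Finsupp.finsetSum_apply, sum_filter, sum_filter]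
  refine sum_congr rfl fun w _ => ?_
  by_cases hw : w ∈ colGroup n d lam T
  · rw [if_pos hw]
    change ((Perm.sign w : ℤ) • Finsupp.single (tabloid n d lam (tabAct d T w)) (1 : ℤ)) q = _
    rw [Finsupp.smul_single_one, Finsupp.single_apply]
    simp only [hw, true_and]
  · simp [hw]

theorem rowKey_lt_of_tabloid_tabAct_eq (hsum : ∑ i, lam i = d) {T T' w : Perm (Fin d)}
    (hT : Standard n d lam T) (hw : w ∈ colGroup n d lam T) (hne : w ≠ 1)
    (h : tabloid n d lam (tabAct d T w) = tabloid n d lam T') :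
    rowKey n d lam T' < rowKey n d lam T :=
  rowKey_congr hsum (tabloid_eq_tabloid.1 h) ▸ rowKey_tabAct_lt hsum hT hw hne

theorem spechtVector_apply_tabloid_self (hsum : ∑ i, lam i = d) {T : Perm (Fin d)}
    (hT : Standard n d lam T) : spechtVector n d lam T (tabloid n d lam T) = 1 := by
  classical
  have hone : 1 ∈ univ.filter fun w =>
      w ∈ colGroup n d lam T ∧ tabloid n d lam (tabAct d T w) = tabloid n d lam T :=
    mem_filter.2 ⟨mem_univ _, one_mem_colGroup T, by rw [tabAct_one]⟩
  rw [spechtVector_apply, sum_eq_single_of_mem 1 hone, Perm.sign_one]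
  · rfl
  intro w hw hne
  obtain ⟨hwT, hwq⟩ := (mem_filter.1 hw).2
  exact absurd (rowKey_lt_of_tabloid_tabAct_eq hsum hT hwT hne hwq) (lt_irrefl _)

theorem rowKey_lt_of_spechtVector_apply_ne_zero (hsum : ∑ i, lam i = d) {T T' : Perm (Fin d)}
    (hT : Standard n d lam T) (hT' : RowStandard n d lam T') (hne : T ≠ T')
    (h : spechtVector n d lam T (tabloid n d lam T') ≠ 0) :
    rowKey n d lam T' < rowKey n d lam T := by
  classical
  rw [spechtVector_apply] at h
  obtain ⟨w, hw, -⟩ := exists_ne_zero_of_sum_ne_zero h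
  obtain ⟨hwT, hwT'⟩ := (mem_filter.1 hw).2
  rcases eq_or_ne w 1 with rfl | hw1
  · rw [tabAct_one] at hwT'
    exact absurd (hT.1.eq_of_rowEquiv hsum hT' (tabloid_eq_tabloid.1 hwT')) hne
  · exact rowKey_lt_of_tabloid_tabAct_eq hsum hT hwT hw1 hwT'

end Specht

theorem specht_vectors_of_standard_tableaux_linearly_independent_general
    (n d : ℕ) (lam : Fin n → ℕ) (hsum : ∑ i, lam i = d) :
    LinearIndependent ℤ
      (fun T : {T : Perm (Fin d) // Standard n d lam T} => spechtVector n d lam T.1) :=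
  Finsupp.linearIndependent_of_triangular (fun T => tabloid n d lam T.1)
    (fun T => rowKey n d lam T.1)
    (fun T => by simp [spechtVector_apply_tabloid_self hsum T.2])
    fun T T' hne h => rowKey_lt_of_spechtVector_apply_ne_zero hsum T.2 T'.2.1
      (Subtype.coe_injective.ne hne) h

/-- for a composition `λ` of `d`, the Specht vectors `v_T`, for `T` ranging over
the standard `λ`-tableaux, are linearly independent in the free `ℤ`-module on
`λ`-tabloids. -/
theorem specht_vectors_of_standard_tableaux_linearly_independent
    (n d : ℕ) (lam : Fin n → ℕ) (hpos : ∀ i, 0 < lam i) (hsum : ∑ i, lam i = d) :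
    LinearIndependent ℤ
      (fun T : {T : Perm (Fin d) // Standard n d lam T} => spechtVector n d lam T.1) :=
  specht_vectors_of_standard_tableaux_linearly_independent_general n d lam hsum
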